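/- arXiv:1007.1796 — 2 statements merged into one kernel-verified Lean document; each statement's English description precedes it below -/
import Mathlib

section
/- For the function ψ(x) = 1 on (−1/2, 1/2) and 0 otherwise, the Wigner distribution W_ψ on ℝ² satisfies ∫_{ℝ²} |W_ψ(x,y)| dx dy = ∞. -/
open MeasureTheory Complex Real

noncomputable def mWigner1 (ψ₁ ψ₂ : ℝ → ℂ) (x y : ℝ) : ℂ :=
  ((2 * Real.pi)⁻¹ : ℝ) •
    ∫ τ : ℝ, ψ₁ (x + τ / 2) * (starRingEnd ℂ) (ψ₂ (x - τ / 2)) *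
      Complex.exp (-Complex.I * (τ * y))

noncomputable def indPsi : ℝ → ℂ := Set.indicator (Set.Ioo (-(1/2) : ℝ) (1/2)) 1

/-!
For `|x| < 1/2` the translates `ψ(x + τ/2)` and `ψ(x - τ/2)` overlap exactly on `|τ| < a`,
`a = 1 - 2|x|`, so `W_ψ(x, y) = (a / π) sinc (a y)`. Since `|sin| ≥ 1/2` on a third of every
period, `∫ |sinc(a y)| dy` dominates a harmonic series and diverges; by Tonelli the strip
`|x| < 1/2` alone already carries infinite mass.
-/

open Set Function
open scoped ComplexConjugate

lemma abs_add_lt_and_abs_sub_lt_iff {x t r : ℝ} :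
    |x + t| < r ∧ |x - t| < r ↔ |x| + |t| < r := by
  simp only [abs_lt]
  rcases abs_cases x with ⟨hx, _⟩ | ⟨hx, _⟩ <;> rcases abs_cases t with ⟨ht, _⟩ | ⟨ht, _⟩ <;>
    rw [hx, ht] <;> constructor <;>
    first | (rintro ⟨⟨_, _⟩, _, _⟩; linarith) | (intro; refine ⟨⟨?_, ?_⟩, ?_, ?_⟩ <;> linarith)

lemma tsum_ofReal_div_natCast_add_one_eq_top {c : ℝ} (hc : 0 < c) :
    ∑' k : ℕ, ENNReal.ofReal (c / (k + 1)) = ⊤ := by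
  by_contra h
  have hsum : Summable fun k : ℕ ↦ c / (k + 1) :=
    (ENNReal.summable_toReal h).congr fun k ↦ ENNReal.toReal_ofReal (by positivity)
  refine Real.not_summable_one_div_natCast ((summable_nat_add_iff 1).mp ?_)
  simpa [div_eq_mul_inv, hc.ne'] using hsum.mul_left c⁻¹

namespace Real

lemma one_half_le_sin {t : ℝ} (h₁ : π / 6 ≤ t) (h₂ : t ≤ 5 * π / 6) : 1 / 2 ≤ Real.sin t := by
  rw [← sin_pi_div_six]
  rcases le_total t (π / 2) with h | h
  · exact sin_le_sin_of_le_of_le_pi_div_two (by linarith [pi_pos]) h h₁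
  · rw [← Real.sin_pi_sub t]
    exact sin_le_sin_of_le_of_le_pi_div_two (by linarith [pi_pos]) (by linarith) (by linarith)

lemma abs_sin_add_nat_mul_pi (t : ℝ) (k : ℕ) : |Real.sin (t + k * π)| = |Real.sin t| := by
  rw [sin_add_nat_mul_pi, abs_mul, abs_pow, abs_neg, abs_one, one_pow, one_mul]

lemma inv_le_abs_sinc_of_mem_Ioo {k : ℕ} {x : ℝ}
    (hx : x ∈ Ioo (π / 6 + k * π) (5 * π / 6 + k * π)) :
    (2 * ((k + 1) * π))⁻¹ ≤ |sinc x| := by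
  obtain ⟨hlo, hhi⟩ := hx
  have hx₀ : 0 < x := by linarith [pi_pos, (by positivity : (0 : ℝ) ≤ k * π)]
  have hsin : 1 / 2 ≤ |Real.sin x| := by
    rw [← sub_add_cancel x (k * π), abs_sin_add_nat_mul_pi]
    exact (one_half_le_sin (by linarith) (by linarith)).trans (le_abs_self _)
  rw [sinc_of_ne_zero hx₀.ne', abs_div, abs_of_pos hx₀, mul_inv, ← one_div]
  exact div_le_div₀ (abs_nonneg _) hsin hx₀ (by linarith)

theorem lintegral_abs_sinc_eq_top : ∫⁻ x, ENNReal.ofReal |sinc x| = ⊤ := by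
  set J : ℕ → Set ℝ := fun k ↦ Ioo (π / 6 + k * π) (5 * π / 6 + k * π)
  have hJ : Pairwise (Disjoint on J) := (pairwise_disjoint_on J).2 fun m n hmn ↦ by
    have : (m + 1 : ℝ) ≤ n := by exact_mod_cast hmn
    refine (Ioc_disjoint_Ioc_of_le ?_).mono Ioo_subset_Ioc_self Ioo_subset_Ioc_self
    nlinarith [pi_pos]
  have piece (k : ℕ) :
      ENNReal.ofReal ((1 / 3) / (k + 1)) ≤ ∫⁻ x in J k, ENNReal.ofReal |sinc x| :=
    calc ENNReal.ofReal ((1 / 3) / (k + 1))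
        = ∫⁻ _ in J k, ENNReal.ofReal (2 * ((k + 1) * π))⁻¹ := by
          rw [setLIntegral_const, Real.volume_Ioo, ← ENNReal.ofReal_mul (by positivity)]
          congr 1
          field_simp
          ring
      _ ≤ ∫⁻ x in J k, ENNReal.ofReal |sinc x| := setLIntegral_mono' measurableSet_Ioo
          fun x hx ↦ ENNReal.ofReal_le_ofReal (inv_le_abs_sinc_of_mem_Ioo hx)
  refine top_unique ?_
  calc ⊤ = ∑' k : ℕ, ENNReal.ofReal ((1 / 3) / (k + 1)) :=
        (tsum_ofReal_div_natCast_add_one_eq_top (by norm_num)).symm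
    _ ≤ ∑' k, ∫⁻ x in J k, ENNReal.ofReal |sinc x| := ENNReal.tsum_le_tsum piece
    _ = ∫⁻ x in ⋃ k, J k, ENNReal.ofReal |sinc x| :=
        (lintegral_iUnion (fun _ ↦ measurableSet_Ioo) hJ _).symm
    _ ≤ ∫⁻ x, ENNReal.ofReal |sinc x| := setLIntegral_le_lintegral _ _

theorem lintegral_abs_sinc_const_mul_eq_top {a : ℝ} (ha : a ≠ 0) :
    ∫⁻ y, ENNReal.ofReal |sinc (a * y)| = ⊤ := by
  rw [← lintegral_map (f := fun x ↦ ENNReal.ofReal |sinc x|) (by fun_prop)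
    (measurable_const_mul a), Real.map_volume_mul_left ha, lintegral_smul_measure,
    lintegral_abs_sinc_eq_top]
  simp [ha]

end Real

lemma integral_cexp_neg_I_mul_eq_sinc (a y : ℝ) :
    ∫ τ in -a..a, cexp (-I * (τ * y)) = 2 * a * sinc (a * y) := by
  rcases eq_or_ne y 0 with rfl | hy
  · simp [two_mul]
  have := intervalIntegral.integral_comp_mul_right (fun t : ℝ ↦ cexp (t * I))
    (neg_ne_zero.mpr hy) (a := -a) (b := a)
  rw [show -a * -y = a * y by ring, show a * -y = -(a * y) by ring,
    intervalIntegral.integral_symm (-(a * y)), integral_exp_mul_I_eq_sinc] at this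
  have hint : (fun τ : ℝ ↦ cexp (-I * (τ * y))) = fun τ ↦ cexp (↑(τ * -y) * I) := by
    ext τ; push_cast; ring_nf
  have hy' : (y : ℂ) ≠ 0 := ofReal_ne_zero.mpr hy
  rw [hint, this, Complex.real_smul]
  push_cast
  field_simp

lemma indPsi_mul_conj_indPsi (x τ : ℝ) :
    indPsi (x + τ / 2) * conj (indPsi (x - τ / 2)) =
      (Ioo (-(1 - 2 * |x|)) (1 - 2 * |x|)).indicator 1 τ := by
  have overlap : (x + τ / 2 ∈ Ioo (-(1 / 2)) (1 / 2) ∧ x - τ / 2 ∈ Ioo (-(1 / 2)) (1 / 2)) ↔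
      τ ∈ Ioo (-(1 - 2 * |x|)) (1 - 2 * |x|) := by
    simp only [mem_Ioo, ← abs_lt, abs_add_lt_and_abs_sub_lt_iff, abs_div, abs_two]
    constructor <;> intro h <;> linarith
  by_cases h : τ ∈ Ioo (-(1 - 2 * |x|)) (1 - 2 * |x|)
  · obtain ⟨h₁, h₂⟩ := overlap.mpr h
    rw [indPsi, indicator_of_mem h₁, indicator_of_mem h₂, indicator_of_mem h]
    simp
  by_cases h₁ : x + τ / 2 ∈ Ioo (-(1 / 2)) (1 / 2)
  · have h₂ : x - τ / 2 ∉ Ioo (-(1 / 2)) (1 / 2) := fun h₂ ↦ h (overlap.mp ⟨h₁, h₂⟩)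
    rw [indPsi, indicator_of_notMem h₂, indicator_of_notMem h]
    simp
  · rw [indPsi, indicator_of_notMem h₁, indicator_of_notMem h]
    simp

lemma mWigner1_indPsi {x : ℝ} (hx : |x| ≤ 1 / 2) (y : ℝ) :
    mWigner1 indPsi indPsi x y = ((1 - 2 * |x|) / π : ℝ) * sinc ((1 - 2 * |x|) * y) := by
  have ha : -(1 - 2 * |x|) ≤ 1 - 2 * |x| := by linarith [abs_nonneg x]
  simp only [mWigner1, indPsi_mul_conj_indPsi,
    ← indicator_mul_left _ 1 (fun τ : ℝ ↦ cexp (-I * (τ * y))), Pi.one_apply, one_mul]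
  rw [integral_indicator measurableSet_Ioo, ← integral_Ioc_eq_integral_Ioo,
    ← intervalIntegral.integral_of_le ha, integral_cexp_neg_I_mul_eq_sinc, Complex.real_smul]
  push_cast
  field_simp

lemma norm_mWigner1_indPsi {x : ℝ} (hx : |x| ≤ 1 / 2) (y : ℝ) :
    ‖mWigner1 indPsi indPsi x y‖ = (1 - 2 * |x|) / π * |sinc ((1 - 2 * |x|) * y)| := by
  rw [mWigner1_indPsi hx, norm_mul, norm_real, norm_real, Real.norm_eq_abs, Real.norm_eq_abs,
    abs_of_nonneg (div_nonneg (by linarith) pi_pos.le)]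

theorem wigner_indicator_not_integrable :
    ∫⁻ p : ℝ × ℝ, ENNReal.ofReal ‖mWigner1 indPsi indPsi p.1 p.2‖ = ⊤ := by
  set S := Ioo (-(1 / 2) : ℝ) (1 / 2)
  set g : ℝ × ℝ → ENNReal := fun p ↦
    ENNReal.ofReal ((1 - 2 * |p.1|) / π * |sinc ((1 - 2 * |p.1|) * p.2)|)
  have hW : ∀ p ∈ S ×ˢ univ, ENNReal.ofReal ‖mWigner1 indPsi indPsi p.1 p.2‖ = g p :=
    fun p hp ↦ by rw [norm_mWigner1_indPsi (abs_lt.mpr hp.1).le]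
  have hinner : ∀ x ∈ S, ∫⁻ y, g (x, y) = ⊤ := fun x hx ↦ by
    have ha : 0 < 1 - 2 * |x| := by linarith [abs_lt.mpr hx]
    simp only [g, ENNReal.ofReal_mul (div_pos ha pi_pos).le]
    rw [lintegral_const_mul' _ _ ENNReal.ofReal_ne_top, lintegral_abs_sinc_const_mul_eq_top ha.ne']
    simp [ha, pi_pos]
  refine top_unique ?_
  calc ⊤ = ∫⁻ _ in S, ⊤ := by simp [S, Real.volume_Ioo]
    _ = ∫⁻ x in S, ∫⁻ y, g (x, y) :=
        setLIntegral_congr_fun measurableSet_Ioo fun x hx ↦ (hinner x hx).symm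
    _ = ∫⁻ p in S ×ˢ univ, g p := by
        rw [Measure.volume_eq_prod, setLIntegral_prod _ (by fun_prop), Measure.restrict_univ]
    _ = ∫⁻ p in S ×ˢ univ, ENNReal.ofReal ‖mWigner1 indPsi indPsi p.1 p.2‖ :=
        setLIntegral_congr_fun (measurableSet_Ioo.prod .univ) fun p hp ↦ (hW p hp).symm
    _ ≤ _ := setLIntegral_le_lintegral _ _
end

section
/- (Flandrin) For every r ≥ 0, the integral of the Wigner distribution of the 1D Hermite function h_λ over the centered disc of radius r satisfies ∫_{|z|≤r} (−1)^λ e^{−|z|²} L_λ(2|z|²) dz ≤ ∫_{|z|≤r} e^{−|z|²} dz = π(1 − e^{−r²}), with strict inequality for λ > 0 and r > 0. -/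
open MeasureTheory Complex Real

noncomputable def laguerre0 (lam : ℕ) (x : ℝ) : ℝ :=
  ∑ i ∈ Finset.range (lam + 1),
    (-1 : ℝ) ^ i * (Nat.choose lam (lam - i) : ℝ) / (Nat.factorial i : ℝ) * x ^ i

/-!
Polar coordinates turn both disc integrals into `π ∫₀^{r²} … dt`. Put
`T n = ∑_{k ≤ n} (-1)^k L_k`. From `L_k - L_{k+1} = ∫₀^x L_k` one gets
`(T (n+1) + T n)' = T n`, so `-e^{-t} (T (n+1) + T n)(2t)` is a primitive of
`(-1)^{n+1} e^{-t} L_{n+1}(2t)`; since `T (n+1) + T n = 1` at `0`, the inequality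
(strict for `r > 0`) amounts to `T n > 0` on `(0, ∞)`.

That positivity comes from Mehler's formula on the diagonal, which gives
`T n (u²) = ∑_{i+j=n} κ_i He_j(u)² / j!` with `κ_i = He_i(0)² / i! ≥ 0`, the coefficients
of `(1 - w²)^{-1/2}`. It is proved by induction on `n`: both sides satisfy
`(f (n+1) + f n)' = 2u f n`, and they agree at `u = 0` because `κ * κ` is the coefficient
sequence `1, 0, 1, 0, …` of `(1 - w²)^{-1}`.
-/

open Finset Polynomial Nat

lemma laguerre0_eq_sum_choose (k : ℕ) (x : ℝ) :
    laguerre0 k x = ∑ i ∈ range (k + 1), (-1) ^ i * (k.choose i : ℝ) / i ! * x ^ i :=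
  sum_congr rfl fun i hi => by rw [choose_symm (Nat.lt_succ_iff.1 (mem_range.1 hi))]

lemma laguerre0_sub_succ (k : ℕ) (x : ℝ) :
    laguerre0 k x - laguerre0 (k + 1) x =
      ∑ i ∈ range (k + 1), (-1) ^ i * (k.choose i : ℝ) / (i + 1)! * x ^ (i + 1) := by
  have hk :
      laguerre0 k x = ∑ i ∈ range (k + 2), (-1) ^ i * (k.choose i : ℝ) / i ! * x ^ i := by
    rw [laguerre0_eq_sum_choose, sum_range_succ _ (k + 1), choose_succ_self, cast_zero]
    ring
  rw [hk, laguerre0_eq_sum_choose, ← sum_sub_distrib, sum_range_succ']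
  simp only [choose_succ_succ', choose_zero_right, sub_self, add_zero]
  refine sum_congr rfl fun i _ => ?_
  push_cast
  ring

lemma hasDerivAt_laguerre0_sub_succ (k : ℕ) (x : ℝ) :
    HasDerivAt (fun x => laguerre0 k x - laguerre0 (k + 1) x) (laguerre0 k x) x := by
  simp_rw [laguerre0_sub_succ, laguerre0_eq_sum_choose k x]
  refine HasDerivAt.fun_sum fun i _ => ((hasDerivAt_pow (i + 1) x).const_mul _).congr_deriv ?_
  rw [factorial_succ]
  push_cast
  field_simp

@[fun_prop]
lemma continuous_laguerre0 (k : ℕ) : Continuous (laguerre0 k) := by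
  unfold laguerre0
  fun_prop

@[simp]
lemma laguerre0_zero_left (x : ℝ) : laguerre0 0 x = 1 := by
  simp [laguerre0]

@[simp]
lemma laguerre0_apply_zero (k : ℕ) : laguerre0 k 0 = 1 := by
  simp [laguerre0_eq_sum_choose, sum_range_succ']

noncomputable def altLaguerreSum (n : ℕ) (x : ℝ) : ℝ :=
  ∑ k ∈ range (n + 1), (-1) ^ k * laguerre0 k x

lemma altLaguerreSum_succ (n : ℕ) (x : ℝ) :
    altLaguerreSum (n + 1) x = altLaguerreSum n x + (-1) ^ (n + 1) * laguerre0 (n + 1) x :=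
  sum_range_succ _ _

lemma altLaguerreSum_succ_add (n : ℕ) (x : ℝ) :
    altLaguerreSum (n + 1) x + altLaguerreSum n x =
      1 + ∑ k ∈ range (n + 1), (-1) ^ k * (laguerre0 k x - laguerre0 (k + 1) x) := by
  rw [altLaguerreSum, altLaguerreSum, sum_range_succ', add_right_comm, ← sum_add_distrib]
  simp only [pow_zero, laguerre0_zero_left, mul_one, pow_succ]
  rw [add_comm]
  congr 1
  exact sum_congr rfl fun k _ => by ring

lemma hasDerivAt_altLaguerreSum_succ_add (n : ℕ) (x : ℝ) :
    HasDerivAt (fun x => altLaguerreSum (n + 1) x + altLaguerreSum n x)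
      (altLaguerreSum n x) x := by
  simp_rw [altLaguerreSum_succ_add]
  exact (HasDerivAt.fun_sum fun k _ =>
    (hasDerivAt_laguerre0_sub_succ k x).const_mul _).const_add 1

lemma altLaguerreSum_succ_add_apply_zero (n : ℕ) :
    altLaguerreSum (n + 1) 0 + altLaguerreSum n 0 = 1 := by
  simp [altLaguerreSum_succ_add]

lemma derivative_hermite_succ (n : ℕ) :
    derivative (hermite (n + 1)) = (n + 1 : ℤ[X]) * hermite n := by
  induction n with
  | zero => simp
  | succ n ih =>
    rw [hermite_succ (n + 1), derivative_sub, derivative_mul, derivative_X, ih, derivative_mul,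
      hermite_succ n]
    simp only [one_mul, derivative_add, derivative_natCast, derivative_one, add_zero, zero_mul,
      zero_add, cast_add, cast_one]
    ring

lemma aeval_hermite_succ_succ_zero (n : ℕ) :
    aeval (0 : ℝ) (hermite (n + 2)) = -(n + 1) * aeval (0 : ℝ) (hermite n) := by
  rw [hermite_succ (n + 1), derivative_hermite_succ]
  simp only [aeval_sub, map_mul, aeval_X, zero_mul, zero_sub, map_add, map_natCast, map_one]
  ring

noncomputable def hermiteSq (n : ℕ) (u : ℝ) : ℝ := aeval u (hermite n) ^ 2 / n !

lemma hermiteSq_nonneg (n : ℕ) (u : ℝ) : 0 ≤ hermiteSq n u := by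
  unfold hermiteSq; positivity

@[simp]
lemma hermiteSq_zero_left (u : ℝ) : hermiteSq 0 u = 1 := by
  simp [hermiteSq]

@[simp]
lemma hermiteSq_one_left (u : ℝ) : hermiteSq 1 u = u ^ 2 := by
  simp [hermiteSq]

lemma hasDerivAt_hermiteSq_add_succ (n : ℕ) (u : ℝ) :
    HasDerivAt (fun u => hermiteSq n u + hermiteSq (n + 1) u) (2 * u * hermiteSq n u) u := by
  have hn := (((hermite n).hasDerivAt_aeval u).pow 2).div_const (n ! : ℝ)
  have hn1 := (((hermite (n + 1)).hasDerivAt_aeval u).pow 2).div_const ((n + 1)! : ℝ)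
  refine (hn.add hn1).congr_deriv ?_
  rw [derivative_hermite_succ, hermite_succ]
  simp only [hermiteSq, Nat.add_one_sub_one, pow_one, aeval_sub, map_mul, aeval_X, map_add,
    map_natCast, map_one, factorial_succ, cast_mul, cast_add, cast_one]
  field_simp
  ring

lemma hermiteSq_add_two_apply_zero (n : ℕ) :
    ((n : ℝ) + 2) * hermiteSq (n + 2) 0 = (n + 1) * hermiteSq n 0 := by
  simp only [hermiteSq, aeval_hermite_succ_succ_zero, factorial_succ]
  push_cast
  field_simp
  ring

lemma hermiteSq_two_mul_apply_zero_pos (a : ℕ) : 0 < hermiteSq (2 * a) 0 := by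
  induction a with
  | zero => simp
  | succ a ih =>
    have h := hermiteSq_add_two_apply_zero (2 * a)
    rw [mul_add_one]
    nlinarith

-- Coefficientwise: if `(1 - w²) A' = w A`, then `(1 - w²) A²` is constant.
theorem sum_antidiagonal_mul_add_two {K : Type*} [Field K] [CharZero K] {a : ℕ → K}
    (h1 : a 1 = 0) (hrec : ∀ j : ℕ, ((j : K) + 2) * a (j + 2) = (j + 1) * a j) (N : ℕ) :
    ∑ p ∈ antidiagonal (N + 2), a p.1 * a p.2 = ∑ p ∈ antidiagonal N, a p.1 * a p.2 := by
  set c : ℕ → K := fun n => ∑ p ∈ antidiagonal n, a p.1 * a p.2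
  set q : ℕ → K := fun n => ∑ p ∈ antidiagonal n, (p.1 : K) * a p.1 * a p.2
  have two_mul_q (n : ℕ) : 2 * q n = n * c n := by
    have hswap : q n = ∑ p ∈ antidiagonal n, (p.2 : K) * a p.1 * a p.2 := by
      rw [← Nat.sum_antidiagonal_swap]
      exact sum_congr rfl fun p _ => by simp only [Prod.fst_swap, Prod.snd_swap]; ring
    rw [two_mul, hswap]
    nth_rewrite 1 [← hswap]
    rw [← sum_add_distrib, mul_sum]
    refine sum_congr rfl fun p hp => ?_
    rw [← mem_antidiagonal.1 hp]
    push_cast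
    ring
  have q_add_two : q (N + 2) = q N + c N := by
    simp only [q, c, Nat.sum_antidiagonal_succ, h1]
    push_cast
    rw [← sum_add_distrib]
    simp only [zero_mul, zero_add, mul_zero]
    refine sum_congr rfl fun p _ => ?_
    linear_combination a p.2 * hrec p.1
  have h := two_mul_q (N + 2)
  rw [q_add_two, mul_add, two_mul_q] at h
  push_cast at h
  have hN : (N : K) + 2 ≠ 0 := by exact_mod_cast (show N + 2 ≠ 0 by omega)
  exact mul_left_cancel₀ hN (by linear_combination -h)

noncomputable def hermiteSqConv (m : ℕ) (u : ℝ) : ℝ :=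
  ∑ p ∈ antidiagonal m, hermiteSq p.1 0 * hermiteSq p.2 u

lemma hermiteSqConv_succ_add_apply_zero (m : ℕ) :
    hermiteSqConv (m + 1) 0 + hermiteSqConv m 0 = 1 := by
  induction m with
  | zero => simp [hermiteSqConv, Nat.sum_antidiagonal_succ]
  | succ m ih =>
    have hconv := sum_antidiagonal_mul_add_two (a := fun n => hermiteSq n 0) (by simp)
      hermiteSq_add_two_apply_zero m
    rw [← ih, add_comm]
    exact congrArg (hermiteSqConv (m + 1) 0 + ·) hconv

lemma hasDerivAt_hermiteSqConv_succ_add (m : ℕ) (u : ℝ) :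
    HasDerivAt (fun u => hermiteSqConv (m + 1) u + hermiteSqConv m u)
      (2 * u * hermiteSqConv m u) u := by
  have hsum (u : ℝ) : hermiteSqConv (m + 1) u + hermiteSqConv m u = hermiteSq (m + 1) 0 +
      ∑ p ∈ antidiagonal m, hermiteSq p.1 0 * (hermiteSq p.2 u + hermiteSq (p.2 + 1) u) := by
    simp only [hermiteSqConv, Nat.sum_antidiagonal_succ', hermiteSq_zero_left, mul_one, mul_add,
      sum_add_distrib]
    ring
  simp_rw [hsum, hermiteSqConv, mul_sum]
  refine (HasDerivAt.fun_sum fun p _ =>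
    ((hasDerivAt_hermiteSq_add_succ p.2 u).const_mul _).congr_deriv ?_).const_add _
  ring

lemma hermiteSqConv_pos (m : ℕ) {u : ℝ} (hu : u ≠ 0) : 0 < hermiteSqConv m u := by
  have hterm : ∀ p ∈ antidiagonal m, 0 ≤ hermiteSq p.1 0 * hermiteSq p.2 u :=
    fun p _ => mul_nonneg (hermiteSq_nonneg _ _) (hermiteSq_nonneg _ _)
  obtain ⟨a, rfl | rfl⟩ := m.even_or_odd'
  · refine sum_pos' hterm ⟨(2 * a, 0), by simp, ?_⟩
    simpa using hermiteSq_two_mul_apply_zero_pos a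
  · refine sum_pos' hterm ⟨(2 * a, 1), by simp, ?_⟩
    have := hermiteSq_two_mul_apply_zero_pos a
    simp only [hermiteSq_one_left]
    positivity

theorem altLaguerreSum_sq_eq_hermiteSqConv (m : ℕ) (u : ℝ) :
    altLaguerreSum m (u ^ 2) = hermiteSqConv m u := by
  induction m generalizing u with
  | zero => simp [altLaguerreSum, hermiteSqConv]
  | succ m ih =>
    have hT (u : ℝ) : HasDerivAt
        (fun u => altLaguerreSum (m + 1) (u ^ 2) + altLaguerreSum m (u ^ 2))
        (2 * u * hermiteSqConv m u) u := by
      have h := (hasDerivAt_altLaguerreSum_succ_add m (u ^ 2)).comp u (hasDerivAt_pow 2 u)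
      refine h.congr_deriv ?_
      rw [ih]
      push_cast
      ring
    have hG := hasDerivAt_hermiteSqConv_succ_add m
    have hpair := eq_of_fderiv_eq (fun u => (hT u).differentiableAt)
      (fun u => (hG u).differentiableAt)
      (fun u => by rw [(hT u).hasFDerivAt.fderiv, (hG u).hasFDerivAt.fderiv]) 0
      (by simp [altLaguerreSum_succ_add_apply_zero, hermiteSqConv_succ_add_apply_zero])
    have := congrFun hpair u
    simp only [ih] at this
    linarith

lemma altLaguerreSum_pos (m : ℕ) {x : ℝ} (hx : 0 < x) : 0 < altLaguerreSum m x := by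
  rw [← sq_sqrt hx.le, altLaguerreSum_sq_eq_hermiteSqConv]
  exact hermiteSqConv_pos m (sqrt_pos.2 hx).ne'

lemma strictMonoOn_altLaguerreSum_succ_add (m : ℕ) :
    StrictMonoOn (fun x => altLaguerreSum (m + 1) x + altLaguerreSum m x) (Set.Ici 0) := by
  have hd := hasDerivAt_altLaguerreSum_succ_add m
  refine strictMonoOn_of_deriv_pos (convex_Ici 0)
    (HasDerivAt.continuousOn fun x _ => hd x) fun x hx => ?_
  rw [interior_Ici] at hx
  rw [(hd x).deriv]
  exact altLaguerreSum_pos m hx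

lemma one_le_altLaguerreSum_succ_add (m : ℕ) {x : ℝ} (hx : 0 ≤ x) :
    1 ≤ altLaguerreSum (m + 1) x + altLaguerreSum m x := by
  simpa only [altLaguerreSum_succ_add_apply_zero] using
    (strictMonoOn_altLaguerreSum_succ_add m).monotoneOn Set.self_mem_Ici hx hx

lemma one_lt_altLaguerreSum_succ_add (m : ℕ) {x : ℝ} (hx : 0 < x) :
    1 < altLaguerreSum (m + 1) x + altLaguerreSum m x := by
  simpa only [altLaguerreSum_succ_add_apply_zero] using
    strictMonoOn_altLaguerreSum_succ_add m Set.self_mem_Ici hx.le hx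

lemma integral_exp_neg_mul_laguerre0_succ (m : ℕ) (s : ℝ) :
    ∫ t in 0..s, (-1) ^ (m + 1) * Real.exp (-t) * laguerre0 (m + 1) (2 * t) =
      1 - Real.exp (-s) * (altLaguerreSum (m + 1) (2 * s) + altLaguerreSum m (2 * s)) := by
  have hF (t : ℝ) : HasDerivAt
      (fun t => -(Real.exp (-t) * (altLaguerreSum (m + 1) (2 * t) + altLaguerreSum m (2 * t))))
      ((-1) ^ (m + 1) * Real.exp (-t) * laguerre0 (m + 1) (2 * t)) t := by
    have hΦ := (hasDerivAt_altLaguerreSum_succ_add m (2 * t)).comp t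
      ((hasDerivAt_id t).const_mul 2)
    refine (((hasDerivAt_neg t).exp.mul hΦ).neg).congr_deriv ?_
    simp only [Function.comp_apply, altLaguerreSum_succ]
    ring
  rw [intervalIntegral.integral_eq_sub_of_hasDerivAt (fun t _ => hF t)
    ((by fun_prop : Continuous _).intervalIntegrable _ _)]
  simp only [neg_zero, Real.exp_zero, mul_zero, altLaguerreSum_succ_add_apply_zero, mul_one]
  ring

lemma integral_exp_neg (s : ℝ) : ∫ t in 0..s, Real.exp (-t) = 1 - Real.exp (-s) := by
  simp [intervalIntegral.integral_comp_neg]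

lemma integral_closedBall_comp_normSq {f : ℝ → ℝ} (hf : Continuous f) {r : ℝ}
    (hr : 0 ≤ r) :
    ∫ z in Metric.closedBall (0 : ℂ) r, f (normSq z) = π * ∫ t in 0..r ^ 2, f t := by
  have hsubst : ∫ y in 0..r, f (y ^ 2) * (2 * y) = ∫ t in 0..r ^ 2, f t := by
    have := intervalIntegral.integral_comp_mul_deriv (a := 0) (b := r)
      (fun y _ => by simpa using (hasDerivAt_pow 2 y)) (by fun_prop) hf
    simpa using this
  have hradial : (Metric.closedBall (0 : ℂ) r).indicator (fun z => f (normSq z))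
      = fun z => (Set.Iic r).indicator (fun y => f (y ^ 2)) ‖z‖ := by
    ext z
    by_cases h : ‖z‖ ≤ r <;> simp [h, normSq_eq_norm_sq]
  rw [← integral_indicator measurableSet_closedBall, hradial, integral_fun_norm_addHaar,
    finrank_real_complex]
  have hweight (y : ℝ) : y ^ (2 - 1) • (Set.Iic r).indicator (fun y => f (y ^ 2)) y =
      (Set.Iic r).indicator (fun y => f (y ^ 2) * (2 * y)) y / 2 := by
    simp only [Nat.add_one_sub_one, pow_one, Set.indicator_apply, Set.mem_Iic, smul_eq_mul]
    split_ifs <;> ring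
  simp_rw [hweight]
  rw [integral_div, setIntegral_indicator measurableSet_Iic, Set.Ioi_inter_Iic,
    ← intervalIntegral.integral_of_le hr, hsubst, measureReal_def, Complex.volume_ball]
  simp only [ENNReal.ofReal_one, one_pow, one_mul, ENNReal.coe_toReal, NNReal.coe_real_pi,
    smul_eq_mul, nsmul_eq_mul, cast_ofNat]
  ring

theorem flandrin_disc (lam : ℕ) (r : ℝ) (hr : 0 ≤ r) :
    (∫ z in Metric.closedBall (0 : ℂ) r,
        (-1 : ℝ) ^ lam * Real.exp (-(Complex.normSq z)) * laguerre0 lam (2 * Complex.normSq z))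
      ≤ ∫ z in Metric.closedBall (0 : ℂ) r, Real.exp (-(Complex.normSq z)) ∧
    (∫ z in Metric.closedBall (0 : ℂ) r, Real.exp (-(Complex.normSq z)))
      = Real.pi * (1 - Real.exp (-(r ^ 2))) ∧
    (0 < lam → 0 < r →
      (∫ z in Metric.closedBall (0 : ℂ) r,
          (-1 : ℝ) ^ lam * Real.exp (-(Complex.normSq z)) * laguerre0 lam (2 * Complex.normSq z))
        < ∫ z in Metric.closedBall (0 : ℂ) r, Real.exp (-(Complex.normSq z))) := by
  rw [integral_closedBall_comp_normSq (f := fun t => Real.exp (-t)) (by fun_prop) hr,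
    integral_closedBall_comp_normSq
      (f := fun t => (-1) ^ lam * Real.exp (-t) * laguerre0 lam (2 * t)) (by fun_prop) hr,
    integral_exp_neg]
  refine ⟨?_, rfl, fun hlam hr0 => ?_⟩
  · rcases lam with _ | m
    · simp
    · rw [integral_exp_neg_mul_laguerre0_succ]
      gcongr
      exact le_mul_of_one_le_right (Real.exp_pos _).le
        (one_le_altLaguerreSum_succ_add m (by positivity))
  · obtain ⟨m, rfl⟩ := Nat.exists_eq_add_one_of_ne_zero hlam.ne'
    rw [integral_exp_neg_mul_laguerre0_succ]
    gcongr
    exact lt_mul_of_one_lt_right (Real.exp_pos _) (one_lt_altLaguerreSum_succ_add m (by positivity))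
end
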